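/- In a line arrangement A restricted to a convex region, for any inner-face vertex v of the dual graph and any line e of A, with s and t the boundary dual vertices on the same side of e closest to e, there is a dual path from s through v to t using at most |A| − 1 edges, and any such path cannot cross e since it must cross each of the other |A| − 1 lines. -/
import Mathlib


/-- The signed affine value of the point `p` with respect to line `i` of the arrangement
given by normals `a` and constants `c` (the line is `{p | lineVal a c i p = 0}`). -/
def lineVal {ι : Type} (a : ι → ℝ × ℝ) (c : ι → ℝ) (i : ι) (p : ℝ × ℝ) : ℝ :=
  (a i).1 * p.1 + (a i).2 * p.2 + c i

/-- `σ` is the sign vector of a (nonempty, open) face of the line arrangement: some point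
lies strictly on the side `σ i` of every line `i`. -/
def RealizesFace {ι : Type} (a : ι → ℝ × ℝ) (c : ι → ℝ) (σ : ι → Bool) : Prop :=
  ∃ p : ℝ × ℝ, ∀ i : ι, lineVal a c i p ≠ 0 ∧ (0 < lineVal a c i p ↔ σ i = true)

/-- Line `ℓ` contributes to the boundary of the face with sign vector `σ`: some point of
`ℓ` lies strictly on the side `σ j` of every other line `j`. -/
def BoundaryLine {ι : Type} (a : ι → ℝ × ℝ) (c : ι → ℝ) (ℓ : ι) (σ : ι → Bool) : Prop :=
  ∃ p : ℝ × ℝ, lineVal a c ℓ p = 0 ∧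
    ∀ j : ι, j ≠ ℓ → lineVal a c j p ≠ 0 ∧ (0 < lineVal a c j p ↔ σ j = true)

/-- The dual graph of the line arrangement: vertices are the sign vectors of the faces,
and two faces are adjacent when they are separated by exactly one line of the
arrangement and share a segment of that line on their boundaries. -/
def dualGraph {ι : Type} (a : ι → ℝ × ℝ) (c : ι → ℝ) : SimpleGraph (ι → Bool) :=
  SimpleGraph.fromRel (fun σ τ =>
    RealizesFace a c σ ∧ RealizesFace a c τ ∧
      ∃ i : ι, σ i ≠ τ i ∧ (∀ j : ι, j ≠ i → σ j = τ j) ∧ BoundaryLine a c i σ)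

lemma lineVal_seg {ι : Type} (a : ι → ℝ × ℝ) (c : ι → ℝ) (i : ι) (p q : ℝ × ℝ) (t : ℝ) :
    lineVal a c i (p + t • (q - p)) = (1 - t) * lineVal a c i p + t * lineVal a c i q := by
  simp [lineVal, Prod.fst_add, Prod.snd_add, Prod.smul_fst, Prod.smul_snd, smul_eq_mul]
  ring

lemma sign_add_of_abs_lt {A B : ℝ} (h : |B| < |A|) : A + B ≠ 0 ∧ (0 < A + B ↔ 0 < A) := by
  rcases lt_trichotomy A 0 with h1 | h1 | h1
  · rw [abs_of_neg h1, abs_lt] at h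
    constructor
    · intro h4; linarith [h.2]
    · constructor <;> intro <;> linarith [h.1, h.2]
  · simp [h1] at h; linarith [abs_nonneg B]
  · rw [abs_of_pos h1, abs_lt] at h
    constructor
    · intro h4; linarith [h.1]
    · constructor <;> intro <;> linarith [h.1, h.2]

lemma exists_generic {ι : Type} [Fintype ι] (a : ι → ℝ × ℝ) (c : ι → ℝ)
    (hnp : ∀ i j : ι, i ≠ j → (a i).1 * (a j).2 ≠ (a i).2 * (a j).1)
    (p : ℝ × ℝ) (hp : ∀ i, lineVal a c i p ≠ 0) (τ : ι → Bool) (hτ : RealizesFace a c τ) :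
    ∃ q : ℝ × ℝ, (∀ i, lineVal a c i q ≠ 0 ∧ (0 < lineVal a c i q ↔ τ i = true)) ∧
      ∀ i j, i ≠ j →
        lineVal a c i p * lineVal a c j q ≠ lineVal a c j p * lineVal a c i q := by
  classical
  obtain ⟨q0, hq0⟩ := hτ
  set L1 : ι × ι → ℝ := fun k => lineVal a c k.1 p * (a k.2).1 - lineVal a c k.2 p * (a k.1).1
    with hL1
  set L2 : ι × ι → ℝ := fun k => lineVal a c k.1 p * (a k.2).2 - lineVal a c k.2 p * (a k.1).2
    with hL2
  have hnz : ∀ i j : ι, i ≠ j → L1 (i, j) ≠ 0 ∨ L2 (i, j) ≠ 0 := by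
    intro i j hij
    by_contra hc
    push_neg at hc
    obtain ⟨h1, h2⟩ := hc
    have key : lineVal a c i p * ((a i).1 * (a j).2 - (a i).2 * (a j).1) = 0 := by
      simp only [hL1, hL2] at h1 h2
      linear_combination (a i).1 * h2 - (a i).2 * h1
    rcases mul_eq_zero.mp key with h | h
    · exact hp i h
    · exact hnp i j hij (by linarith)
  obtain ⟨s, hs⟩ := Infinite.exists_notMem_finset
    ((Finset.univ : Finset (ι × ι)).image fun k => -L1 k / L2 k)
  have hL : ∀ i j : ι, i ≠ j → L1 (i, j) + s * L2 (i, j) ≠ 0 := by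
    intro i j hij h0
    rcases eq_or_ne (L2 (i, j)) 0 with h2 | h2
    · rw [h2] at h0
      rcases hnz i j hij with h | h
      · exact h (by linarith)
      · exact h h2
    · apply hs
      rw [Finset.mem_image]
      refine ⟨(i, j), Finset.mem_univ _, ?_⟩
      field_simp
      linarith
  set u : ℝ × ℝ := (1, s) with hu
  set d : ι → ℝ := fun i => (a i).1 + (a i).2 * s with hd
  have hfq : ∀ (i : ι) (ε : ℝ), lineVal a c i (q0 + ε • u) = lineVal a c i q0 + ε * d i := by
    intro i ε
    simp [lineVal, hu, hd, Prod.fst_add, Prod.snd_add, Prod.smul_fst, Prod.smul_snd, smul_eq_mul]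
    ring
  -- choose δ > 0 such that δ ≤ |f i q0| / (|d i| + 1) for all i
  have hδ : ∃ δ : ℝ, 0 < δ ∧ ∀ i : ι, δ ≤ |lineVal a c i q0| / (|d i| + 1) := by
    rcases isEmpty_or_nonempty ι with hι | hι
    · exact ⟨1, one_pos, fun i => (IsEmpty.false i).elim⟩
    · set F : Finset ℝ := Finset.univ.image fun i : ι => |lineVal a c i q0| / (|d i| + 1) with hF
      have hFne : F.Nonempty := Finset.image_nonempty.mpr Finset.univ_nonempty
      refine ⟨F.min' hFne, ?_, ?_⟩
      · obtain ⟨i, _, hi⟩ := Finset.mem_image.mp (F.min'_mem hFne)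
        rw [← hi]
        apply div_pos (abs_pos.mpr (hq0 i).1) (by positivity)
      · intro i
        exact F.min'_le _ (Finset.mem_image.mpr ⟨i, Finset.mem_univ _, rfl⟩)
  obtain ⟨δ, hδpos, hδle⟩ := hδ
  set B : Finset ℝ := Finset.univ.image fun k : ι × ι =>
    -(lineVal a c k.1 p * lineVal a c k.2 q0 - lineVal a c k.2 p * lineVal a c k.1 q0) /
      (L1 k + s * L2 k) with hB
  obtain ⟨ε, hεI, hεB⟩ := (Set.Ioo_infinite hδpos).exists_notMem_finset B
  obtain ⟨hε0, hεδ⟩ := hεI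
  refine ⟨q0 + ε • u, ?_, ?_⟩
  · intro i
    rw [hfq]
    have habs : |ε * d i| < |lineVal a c i q0| := by
      rw [abs_mul, abs_of_pos hε0]
      have h1 : ε < |lineVal a c i q0| / (|d i| + 1) := lt_of_lt_of_le hεδ (hδle i)
      have h2 : ε * (|d i| + 1) < |lineVal a c i q0| := by
        rw [← lt_div_iff₀ (by positivity)]
        exact h1
      nlinarith [abs_nonneg (d i)]
    obtain ⟨hne, hiff⟩ := sign_add_of_abs_lt habs
    exact ⟨hne, hiff.trans (hq0 i).2⟩
  · intro i j hij h0
    rw [hfq, hfq] at h0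
    have hkey : (lineVal a c i p * lineVal a c j q0 - lineVal a c j p * lineVal a c i q0)
        + ε * (L1 (i, j) + s * L2 (i, j)) = 0 := by
      simp only [hL1, hL2, hd] at *
      linear_combination h0
    apply hεB
    rw [hB, Finset.mem_image]
    refine ⟨(i, j), Finset.mem_univ _, ?_⟩
    have hLij := hL i j hij
    field_simp
    linarith


lemma bool_ne_true {x y : Bool} (h : x ≠ y) (hx : x = true) : y = false := by
  revert h hx; revert x y; decide

lemma bool_ne_false {x y : Bool} (h : x ≠ y) (hx : x = false) : y = true := by
  revert h hx; revert x y; decide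

lemma convex_pos {A B t : ℝ} (hA : 0 < A) (hB : 0 < B) (h0 : 0 ≤ t) (h1 : t ≤ 1) :
    0 < (1 - t) * A + t * B := by
  rcases lt_or_ge t 1 with h | h
  · nlinarith [mul_pos (by linarith : (0:ℝ) < 1 - t) hA, mul_nonneg h0 hB.le]
  · have ht : t = 1 := le_antisymm h1 h
    rw [ht]; norm_num; exact hB

lemma exists_step {ι : Type} [Fintype ι] [DecidableEq ι] (a : ι → ℝ × ℝ) (c : ι → ℝ)
    (hnp : ∀ i j : ι, i ≠ j → (a i).1 * (a j).2 ≠ (a i).2 * (a j).1)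
    (σ τ : ι → Bool) (hσ : RealizesFace a c σ) (hτ : RealizesFace a c τ)
    (hne : ∃ i, σ i ≠ τ i) :
    ∃ i, σ i ≠ τ i ∧ (dualGraph a c).Adj σ (Function.update σ i (τ i)) ∧
      RealizesFace a c (Function.update σ i (τ i)) := by
  classical
  obtain ⟨p, hp⟩ := hσ
  obtain ⟨q, hq, hpair⟩ := exists_generic a c hnp p (fun i => (hp i).1) τ hτ
  set f : ι → ℝ × ℝ → ℝ := lineVal a c with hf
  set T : ι → ℝ := fun i => f i p / (f i p - f i q) with hT
  set seg : ℝ → ℝ × ℝ := fun t => p + t • (q - p) with hseg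
  have hsigns : ∀ i, σ i ≠ τ i →
      (0 < f i p ∧ f i q < 0 ∧ σ i = true) ∨ (f i p < 0 ∧ 0 < f i q ∧ σ i = false) := by
    intro i hi
    rcases Bool.eq_false_or_eq_true (σ i) with hb | hb
    · left
      have hτi : τ i = false := bool_ne_true hi hb
      have hqi : f i q < 0 := by
        rcases (hq i).1.lt_or_gt with h | h
        · exact h
        · exact absurd ((hq i).2.mp h) (by simp [hτi])
      exact ⟨(hp i).2.mpr hb, hqi, hb⟩
    · right
      have hτi : τ i = true := bool_ne_false hi hb
      have hpi : f i p < 0 := by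
        rcases (hp i).1.lt_or_gt with h | h
        · exact h
        · exact absurd ((hp i).2.mp h) (by simp [hb])
      exact ⟨hpi, (hq i).2.mpr hτi, hb⟩
  have hTmem : ∀ i, σ i ≠ τ i → 0 < T i ∧ T i < 1 := by
    intro i hi
    rcases hsigns i hi with ⟨h1, h2, _⟩ | ⟨h1, h2, _⟩
    · constructor
      · exact div_pos h1 (by linarith)
      · rw [div_lt_one (by linarith)]; linarith
    · have e1 : T i = (-(f i p)) / ((-(f i p)) - (-(f i q))) := by
        rw [hT]
        rw [show (-(f i p)) - (-(f i q)) = -(f i p - f i q) by ring, neg_div_neg_eq]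
      rw [e1]
      constructor
      · exact div_pos (by linarith) (by linarith)
      · rw [div_lt_one (by linarith)]; linarith
  have hkey : ∀ i, σ i ≠ τ i → ∀ t : ℝ, f i (seg t) = (f i q - f i p) * (t - T i) := by
    intro i hi t
    have hden : f i p - f i q ≠ 0 := by
      rcases hsigns i hi with ⟨h1, h2, _⟩ | ⟨h1, h2, _⟩ <;> intro h <;> linarith
    rw [hseg]
    show lineVal a c i (p + t • (q - p)) = _
    rw [lineVal_seg, hT]
    field_simp
    ring
  have hseg_lt : ∀ j, σ j ≠ τ j → ∀ t : ℝ, t < T j →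
      f j (seg t) ≠ 0 ∧ (0 < f j (seg t) ↔ σ j = true) := by
    intro j hj t ht
    rw [hkey j hj t]
    rcases hsigns j hj with ⟨h1, h2, hb⟩ | ⟨h1, h2, hb⟩
    · have hpos := mul_pos_of_neg_of_neg
        (show f j q - f j p < 0 by linarith) (by linarith : t - T j < 0)
      exact ⟨ne_of_gt hpos, by simp [hb, hpos]⟩
    · have hneg := mul_neg_of_pos_of_neg
        (show 0 < f j q - f j p by linarith) (by linarith : t - T j < 0)
      refine ⟨ne_of_lt hneg, ?_⟩
      rw [hb]
      constructor
      · intro h; linarith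
      · intro h; simp at h
  have hseg_gt : ∀ j, σ j ≠ τ j → ∀ t : ℝ, T j < t →
      f j (seg t) ≠ 0 ∧ (0 < f j (seg t) ↔ τ j = true) := by
    intro j hj t ht
    rw [hkey j hj t]
    rcases hsigns j hj with ⟨h1, h2, hb⟩ | ⟨h1, h2, hb⟩
    · have hτj : τ j = false := bool_ne_true hj hb
      have hneg := mul_neg_of_neg_of_pos
        (show f j q - f j p < 0 by linarith) (by linarith : 0 < t - T j)
      refine ⟨ne_of_lt hneg, ?_⟩
      rw [hτj]
      constructor
      · intro h; linarith
      · intro h; simp at h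
    · have hτj : τ j = true := bool_ne_false hj hb
      have hpos := mul_pos
        (show 0 < f j q - f j p by linarith) (by linarith : 0 < t - T j)
      exact ⟨ne_of_gt hpos, by simp [hτj, hpos]⟩
  have hseg_same : ∀ j, σ j = τ j → ∀ t : ℝ, 0 ≤ t → t ≤ 1 →
      f j (seg t) ≠ 0 ∧ (0 < f j (seg t) ↔ σ j = true) := by
    intro j hj t ht0 ht1
    have hval : f j (seg t) = (1 - t) * f j p + t * f j q := lineVal_seg a c j p q t
    rw [hval]
    rcases Bool.eq_false_or_eq_true (σ j) with hb | hb
    · have h1 : 0 < f j p := (hp j).2.mpr hb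
      have h2 : 0 < f j q := (hq j).2.mpr (hj ▸ hb)
      have hpos : 0 < (1 - t) * f j p + t * f j q := convex_pos h1 h2 ht0 ht1
      exact ⟨ne_of_gt hpos, by simp [hb, hpos]⟩
    · have h1 : f j p < 0 := by
        rcases (hp j).1.lt_or_gt with h | h
        · exact h
        · exact absurd ((hp j).2.mp h) (by simp [hb])
      have h2 : f j q < 0 := by
        rcases (hq j).1.lt_or_gt with h | h
        · exact h
        · exact absurd ((hq j).2.mp h) (by simp [← hj, hb])
      have hneg : (1 - t) * f j p + t * f j q < 0 := by
        have := convex_pos (by linarith : 0 < -(f j p)) (by linarith : 0 < -(f j q)) ht0 ht1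
        linarith
      refine ⟨ne_of_lt hneg, ?_⟩
      rw [hb]
      constructor
      · intro h; linarith
      · intro h; simp at h
  have hTinj : ∀ i j, i ≠ j → σ i ≠ τ i → σ j ≠ τ j → T i ≠ T j := by
    intro i j hij hi hj hTij
    have hdi : f i p - f i q ≠ 0 := by
      rcases hsigns i hi with ⟨h1, h2, _⟩ | ⟨h1, h2, _⟩ <;> intro h <;> linarith
    have hdj : f j p - f j q ≠ 0 := by
      rcases hsigns j hj with ⟨h1, h2, _⟩ | ⟨h1, h2, _⟩ <;> intro h <;> linarith
    apply hpair i j hij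
    rw [hT] at hTij
    simp only at hTij
    have hcross := div_eq_div_iff hdi hdj |>.mp hTij
    show f i p * f j q = f j p * f i q
    nlinarith [hcross]
  set D : Finset ι := Finset.univ.filter fun i => σ i ≠ τ i with hD
  have hDne : D.Nonempty := by
    obtain ⟨i, hi⟩ := hne
    exact ⟨i, by simp [hD, hi]⟩
  obtain ⟨i0, hi0D, hi0min⟩ := D.exists_min_image T hDne
  have hi0 : σ i0 ≠ τ i0 := by simpa [hD] using hi0D
  have hi0lt : ∀ j, σ j ≠ τ j → j ≠ i0 → T i0 < T j := by
    intro j hj hji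
    have hle := hi0min j (by simp [hD, hj])
    exact lt_of_le_of_ne hle (hTinj i0 j (Ne.symm hji) hi0 hj)
  obtain ⟨hT0pos, hT0lt1⟩ := hTmem i0 hi0
  have hbd : BoundaryLine a c i0 σ := by
    refine ⟨seg (T i0), ?_, ?_⟩
    · rw [show lineVal a c i0 (seg (T i0)) = f i0 (seg (T i0)) from rfl, hkey i0 hi0]
      ring
    · intro j hj
      by_cases hjD : σ j ≠ τ j
      · exact hseg_lt j hjD (T i0) (hi0lt j hjD hj)
      · push_neg at hjD
        exact hseg_same j hjD (T i0) hT0pos.le hT0lt1.le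
  set S : Finset ℝ := insert 1 ((D.erase i0).image T) with hS
  have hSne : S.Nonempty := ⟨1, by simp [hS]⟩
  set t2 : ℝ := S.min' hSne with ht2
  have ht2le1 : t2 ≤ 1 := S.min'_le 1 (by simp [hS])
  have ht2leT : ∀ j, σ j ≠ τ j → j ≠ i0 → t2 ≤ T j := by
    intro j hj hji
    apply S.min'_le (T j)
    rw [hS, Finset.mem_insert]
    right
    exact Finset.mem_image.mpr ⟨j, Finset.mem_erase.mpr ⟨hji, by simp [hD, hj]⟩, rfl⟩
  have hT0t2 : T i0 < t2 := by
    have hmem : t2 ∈ S := S.min'_mem hSne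
    rw [hS, Finset.mem_insert] at hmem
    rcases hmem with h | h
    · rw [h]; exact hT0lt1
    · obtain ⟨j, hjmem, hjeq⟩ := Finset.mem_image.mp h
      obtain ⟨hji, hjD⟩ := Finset.mem_erase.mp hjmem
      rw [← hjeq]
      exact hi0lt j (by simpa [hD] using hjD) hji
  set t'' : ℝ := (T i0 + t2) / 2 with ht''
  have hgt1 : T i0 < t'' := by rw [ht'']; linarith
  have hlt2 : t'' < t2 := by rw [ht'']; linarith
  have hreal' : RealizesFace a c (Function.update σ i0 (τ i0)) := by
    refine ⟨seg t'', ?_⟩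
    intro j
    by_cases hji : j = i0
    · subst hji
      have := hseg_gt j hi0 t'' hgt1
      rwa [Function.update_self]
    · rw [Function.update_of_ne hji]
      by_cases hjD : σ j ≠ τ j
      · exact hseg_lt j hjD t'' (lt_of_lt_of_le hlt2 (ht2leT j hjD hji))
      · push_neg at hjD
        exact hseg_same j hjD t'' (by linarith) (by linarith)
  refine ⟨i0, hi0, ?_, hreal'⟩
  rw [dualGraph, SimpleGraph.fromRel_adj]
  constructor
  · intro h
    have h2 := congrFun h i0
    rw [Function.update_self] at h2
    exact hi0 h2
  · left
    refine ⟨⟨p, hp⟩, hreal', i0, ?_, ?_, hbd⟩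
    · rw [Function.update_self]; exact hi0
    · intro j hj
      rw [Function.update_of_ne hj]


lemma bool_ne_ne {x y z : Bool} (h1 : x ≠ y) (h2 : x ≠ z) : y = z := by
  revert h1 h2; revert x y z; decide

/-- There is a dual walk between any two faces whose length is the number of
separating lines. -/
lemma exists_walk {ι : Type} [Fintype ι] [DecidableEq ι] (a : ι → ℝ × ℝ) (c : ι → ℝ)
    (hnp : ∀ i j : ι, i ≠ j → (a i).1 * (a j).2 ≠ (a i).2 * (a j).1) :
    ∀ (n : ℕ) (σ τ : ι → Bool), RealizesFace a c σ → RealizesFace a c τ →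
      (Finset.univ.filter fun i => σ i ≠ τ i).card ≤ n →
      ∃ w : (dualGraph a c).Walk σ τ,
        w.length ≤ (Finset.univ.filter fun i => σ i ≠ τ i).card := by
  intro n
  induction n with
  | zero =>
    intro σ τ hσ hτ hcard
    have hempty : (Finset.univ.filter fun i => σ i ≠ τ i) = ∅ :=
      Finset.card_eq_zero.mp (Nat.le_zero.mp hcard)
    have hστ : σ = τ := by
      funext i
      by_contra hi
      have : i ∈ (Finset.univ.filter fun i => σ i ≠ τ i) := by simp [hi]
      simp [hempty] at this
    subst hστ
    exact ⟨SimpleGraph.Walk.nil, by simp⟩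
  | succ n ih =>
    intro σ τ hσ hτ hcard
    by_cases hστ : σ = τ
    · subst hστ
      exact ⟨SimpleGraph.Walk.nil, by simp⟩
    · have hne : ∃ i, σ i ≠ τ i := by
        by_contra hc
        push_neg at hc
        exact hστ (funext hc)
      obtain ⟨i, hi, hadj, hreal'⟩ := exists_step a c hnp σ τ hσ hτ hne
      set σ' := Function.update σ i (τ i) with hσ'
      have hfilter : (Finset.univ.filter fun j => σ' j ≠ τ j)
          = (Finset.univ.filter fun j => σ j ≠ τ j).erase i := by
        ext j
        rcases eq_or_ne j i with rfl | hji
        · simp [hσ', Function.update_self]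
        · simp [hσ', Function.update_of_ne hji, hji]
      have himem : i ∈ (Finset.univ.filter fun j => σ j ≠ τ j) := by simp [hi]
      have hcard' : (Finset.univ.filter fun j => σ' j ≠ τ j).card ≤ n := by
        rw [hfilter, Finset.card_erase_of_mem himem]
        omega
      obtain ⟨w', hw'⟩ := ih σ' τ hreal' hτ hcard'
      refine ⟨SimpleGraph.Walk.cons hadj w', ?_⟩
      rw [SimpleGraph.Walk.length_cons]
      rw [hfilter, Finset.card_erase_of_mem himem] at hw'
      have hpos : 0 < (Finset.univ.filter fun j => σ j ≠ τ j).card :=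
        Finset.card_pos.mpr ⟨i, himem⟩
      omega

/-- Each dual edge flips exactly one coordinate. -/
lemma adj_flip {ι : Type} (a : ι → ℝ × ℝ) (c : ι → ℝ) {x y : ι → Bool}
    (h : (dualGraph a c).Adj x y) :
    ∃ i, x i ≠ y i ∧ ∀ j, j ≠ i → x j = y j := by
  rw [dualGraph, SimpleGraph.fromRel_adj] at h
  rcases h.2 with ⟨-, -, i, hi, hj, -⟩ | ⟨-, -, i, hi, hj, -⟩
  · exact ⟨i, hi, hj⟩
  · exact ⟨i, Ne.symm hi, fun j hj' => (hj j hj').symm⟩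

/-- The number of separating lines is a lower bound for the length of any dual walk. -/
lemma card_diff_le_length {ι : Type} [Fintype ι] [DecidableEq ι]
    (a : ι → ℝ × ℝ) (c : ι → ℝ) :
    ∀ {x y : ι → Bool} (w : (dualGraph a c).Walk x y),
      (Finset.univ.filter fun i => x i ≠ y i).card ≤ w.length := by
  intro x y w
  induction w with
  | nil => simp
  | @cons x z y h w ih =>
    obtain ⟨i, hi, hj⟩ := adj_flip a c h
    have hsub : (Finset.univ.filter fun j => x j ≠ y j)
        ⊆ insert i (Finset.univ.filter fun j => z j ≠ y j) := by
      intro j hjmem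
      simp only [Finset.mem_filter, Finset.mem_univ, true_and] at hjmem
      rcases eq_or_ne j i with rfl | hji
      · exact Finset.mem_insert_self _ _
      · apply Finset.mem_insert_of_mem
        simp only [Finset.mem_filter, Finset.mem_univ, true_and]
        rw [← hj j hji]
        exact hjmem
    calc (Finset.univ.filter fun j => x j ≠ y j).card
        ≤ (insert i (Finset.univ.filter fun j => z j ≠ y j)).card := Finset.card_le_card hsub
      _ ≤ (Finset.univ.filter fun j => z j ≠ y j).card + 1 := Finset.card_insert_le _ _
      _ ≤ w.length + 1 := by omega
      _ = (SimpleGraph.Walk.cons h w).length := (SimpleGraph.Walk.length_cons h w).symm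

/-- A short walk between two faces separated by every line except `e` never crosses `e`. -/
lemma walk_side {ι : Type} [Fintype ι] [DecidableEq ι] (a : ι → ℝ × ℝ) (c : ι → ℝ) (e : ι) :
    ∀ {x y : ι → Bool} (w : (dualGraph a c).Walk x y), x e = y e →
      w.length ≤ (Finset.univ.filter fun i => x i ≠ y i).card →
      ∀ τ ∈ w.support, τ e = x e := by
  intro x y w
  induction w with
  | nil =>
    intro _ _ τ hτ
    rw [SimpleGraph.Walk.support_nil, List.mem_singleton] at hτ
    rw [hτ]
  | @cons x z y h w ih =>
    intro hxy hlen τ hτ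
    obtain ⟨i, hi, hj⟩ := adj_flip a c h
    have hlenA := card_diff_le_length a c w
    rw [SimpleGraph.Walk.length_cons] at hlen
    have hemem : e ∉ (Finset.univ.filter fun j => x j ≠ y j) := by simp [hxy]
    by_cases hie : i = e
    · exfalso
      subst hie
      have hsub : insert i (Finset.univ.filter fun j => x j ≠ y j)
          ⊆ (Finset.univ.filter fun j => z j ≠ y j) := by
        intro j hjm
        simp only [Finset.mem_insert, Finset.mem_filter, Finset.mem_univ, true_and] at hjm ⊢
        rcases hjm with rfl | hjm
        · exact fun hh => hi (hxy.trans hh.symm)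
        · have hji : j ≠ i := by
            rintro rfl
            exact hemem (by simp [hjm])
          rw [← hj j hji]
          exact hjm
      have hcard := Finset.card_le_card hsub
      rw [Finset.card_insert_of_notMem hemem] at hcard
      omega
    · have hze : z e = x e := (hj e (fun hh => hie hh.symm)).symm
      rw [SimpleGraph.Walk.support_cons, List.mem_cons] at hτ
      rcases hτ with rfl | hτ
      · rfl
      · have hzey : z e = y e := hze.trans hxy
        have hnext : w.length ≤ (Finset.univ.filter fun j => z j ≠ y j).card := by
          by_cases hixy : x i ≠ y i
          · have hfe : (Finset.univ.filter fun j => z j ≠ y j)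
                = (Finset.univ.filter fun j => x j ≠ y j).erase i := by
              ext j
              simp only [Finset.mem_erase, Finset.mem_filter, Finset.mem_univ, true_and]
              rcases eq_or_ne j i with rfl | hji
              · have hzy : z j = y j := bool_ne_ne hi hixy
                simp [hzy]
              · rw [← hj j hji]
                simp [hji]
            have himem : i ∈ (Finset.univ.filter fun j => x j ≠ y j) := by simp [hixy]
            have hpos : 0 < (Finset.univ.filter fun j => x j ≠ y j).card :=
              Finset.card_pos.mpr ⟨i, himem⟩
            rw [hfe, Finset.card_erase_of_mem himem]
            omega
          · exfalso
            push_neg at hixy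
            have hinz : i ∉ (Finset.univ.filter fun j => x j ≠ y j) := by simp [hixy]
            have hsub : insert i (Finset.univ.filter fun j => x j ≠ y j)
                ⊆ (Finset.univ.filter fun j => z j ≠ y j) := by
              intro j hjm
              simp only [Finset.mem_insert, Finset.mem_filter, Finset.mem_univ, true_and] at hjm ⊢
              rcases hjm with rfl | hjm
              · exact fun hh => hi (hixy.trans hh.symm)
              · have hji : j ≠ i := by
                  rintro rfl
                  exact hinz (by simp [hjm])
                rw [← hj j hji]
                exact hjm
            have hcard := Finset.card_le_card hsub
            rw [Finset.card_insert_of_notMem hinz] at hcard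
            omega
        have := ih hzey hnext τ hτ
        rw [this, hze]


/-- In a line arrangement `A` (pairwise non-parallel lines), let `e` be
a line, let `v` be a face, and let `s`, `t` be the two faces on the same side of `e` as
`v` that are closest to `e` (so that `s` and `t` are separated by every line other than
`e`).  Then there is a dual path from `s` through `v` to `t` with at most `|A| - 1`
edges, and any dual path from `s` to `t` with at most `|A| - 1` edges never crosses `e`
(every face on it lies on the same side of `e` as `s`). -/
theorem dual_path_avoiding_line {ι : Type} [Fintype ι] (a : ι → ℝ × ℝ) (c : ι → ℝ)
    (ha : ∀ i : ι, a i ≠ 0)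
    (hnp : ∀ i j : ι, i ≠ j → (a i).1 * (a j).2 ≠ (a i).2 * (a j).1)
    (e : ι) (σs σv σt : ι → Bool)
    (hs : RealizesFace a c σs) (hv : RealizesFace a c σv) (ht : RealizesFace a c σt)
    (hst : σs e = σt e) (hve : σv e = σs e)
    (hsep : ∀ i : ι, i ≠ e → σs i ≠ σt i) :
    (∃ (p : (dualGraph a c).Walk σs σv) (q : (dualGraph a c).Walk σv σt),
        p.length + q.length ≤ Fintype.card ι - 1) ∧
    (∀ w : (dualGraph a c).Walk σs σt, w.length ≤ Fintype.card ι - 1 →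
        ∀ τ ∈ w.support, τ e = σs e) := by
  classical
  constructor
  · -- existence of the short path through v
    obtain ⟨p, hp⟩ := exists_walk a c hnp
      ((Finset.univ.filter fun i => σs i ≠ σv i).card) σs σv hs hv le_rfl
    obtain ⟨q, hq⟩ := exists_walk a c hnp
      ((Finset.univ.filter fun i => σv i ≠ σt i).card) σv σt hv ht le_rfl
    refine ⟨p, q, ?_⟩
    set D1 := Finset.univ.filter fun i => σs i ≠ σv i with hD1
    set D2 := Finset.univ.filter fun i => σv i ≠ σt i with hD2
    have hdisj : Disjoint D1 D2 := by
      rw [Finset.disjoint_left]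
      intro j h1 h2
      simp only [hD1, Finset.mem_filter, Finset.mem_univ, true_and] at h1
      simp only [hD2, Finset.mem_filter, Finset.mem_univ, true_and] at h2
      have hst' : σs j = σt j := bool_ne_ne (Ne.symm h1) h2
      have hje : j = e := by
        by_contra hne
        exact hsep j hne hst'
      subst hje
      exact h1 hve.symm
    have hsub : D1 ∪ D2 ⊆ Finset.univ.erase e := by
      intro j hj
      rw [Finset.mem_erase]
      refine ⟨?_, Finset.mem_univ j⟩
      rintro rfl
      rcases Finset.mem_union.mp hj with hj | hj
      · simp only [hD1, Finset.mem_filter, Finset.mem_univ, true_and] at hj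
        exact hj hve.symm
      · simp only [hD2, Finset.mem_filter, Finset.mem_univ, true_and] at hj
        exact hj (hve.trans hst)
    calc p.length + q.length ≤ D1.card + D2.card := Nat.add_le_add hp hq
      _ = (D1 ∪ D2).card := (Finset.card_union_of_disjoint hdisj).symm
      _ ≤ (Finset.univ.erase e).card := Finset.card_le_card hsub
      _ = Fintype.card ι - 1 := by
        rw [Finset.card_erase_of_mem (Finset.mem_univ e), Finset.card_univ]
  · -- short paths never cross e
    intro w hw τ hτ
    have hfe : (Finset.univ.filter fun i => σs i ≠ σt i) = Finset.univ.erase e := by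
      ext j
      simp only [Finset.mem_filter, Finset.mem_univ, true_and, Finset.mem_erase, and_true]
      constructor
      · intro hj
        rintro rfl
        exact hj hst
      · intro hj
        exact hsep j hj
    apply walk_side a c e w hst ?_ τ hτ
    rw [hfe, Finset.card_erase_of_mem (Finset.mem_univ e), Finset.card_univ]
    exact hw
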